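/- Convergence of the Picard iteration (pricing algorithm): under the seniority structure condition, letting Φ : ℝ^{n(m+1)} → ℝ^{n(m+1)} denote the map sending (r¹,…,r^m,s) to the tuple of right-hand sides of the liquidation value system, for every starting point x₀ ∈ ℝ^{n(m+1)} the iterates Φ^k(x₀) converge as k → ∞ (in the ℓ¹-norm) to the unique solution of the liquidation value system. -/

import Mathlib

open Matrix Finset Filter

noncomputable section

/-- Componentwise minimum of two vectors in ℝ^n. -/
def vmin {n : ℕ} (x y : Fin n → ℝ) : Fin n → ℝ := fun k => min (x k) (y k)

/-- Componentwise positive part of a vector in ℝ^n. -/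
def vpos {n : ℕ} (x : Fin n → ℝ) : Fin n → ℝ := fun k => max (x k) 0

/-- ℓ¹-norm of a vector in ℝ^n. -/
def l1 {n : ℕ} (x : Fin n → ℝ) : ℝ := ∑ k, |x k|

/-- An n×n matrix is strictly left substochastic if all entries are nonnegative
and every column sum is < 1. -/
def StrictlyLeftSubstochastic {n : ℕ} (M : Matrix (Fin n) (Fin n) ℝ) : Prop :=
  (∀ i j, 0 ≤ M i j) ∧ ∀ j, ∑ i, M i j < 1

/-- The liquidation value system: `r j` for `j = 0` is the highest-priority recovery claim,
`s` is equity. -/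
def LiqSystem {n m : ℕ} (a : Fin n → ℝ) (Ms : Matrix (Fin n) (Fin n) ℝ)
    (Md : Fin m → Matrix (Fin n) (Fin n) ℝ)
    (d : Fin m → (Fin m → Fin n → ℝ) → (Fin n → ℝ) → (Fin n → ℝ))
    (r : Fin m → Fin n → ℝ) (s : Fin n → ℝ) : Prop :=
  (∀ j : Fin m, (j : ℕ) = 0 →
    r j = vmin (d j r s) (a + Ms.mulVec s + ∑ i, (Md i).mulVec (r i))) ∧
  (∀ j : Fin m, (j : ℕ) ≠ 0 →
    r j = vmin (d j r s)
      (vpos (a + Ms.mulVec s + ∑ i, (Md i).mulVec (r i) - ∑ i ∈ Finset.Iio j, d i r s))) ∧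
  s = vpos (a + Ms.mulVec s + ∑ i, (Md i).mulVec (r i) - ∑ i, d i r s)

/-- I^max : the maximum column sum over all ownership matrices. -/
def Imax {n m : ℕ} (Ms : Matrix (Fin n) (Fin n) ℝ)
    (Md : Fin m → Matrix (Fin n) (Fin n) ℝ) : ℝ :=
  max (⨆ j, ∑ i, Ms i j) (⨆ l, ⨆ j, ∑ i, (Md l) i j)

/-- The map Φ sending (r¹,…,r^m,s) to the tuple of right-hand sides of the
liquidation value system. -/
def Phi {n m : ℕ} (a : Fin n → ℝ) (Ms : Matrix (Fin n) (Fin n) ℝ)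
    (Md : Fin m → Matrix (Fin n) (Fin n) ℝ)
    (d : Fin m → (Fin m → Fin n → ℝ) → (Fin n → ℝ) → (Fin n → ℝ)) :
    ((Fin m → Fin n → ℝ) × (Fin n → ℝ)) → ((Fin m → Fin n → ℝ) × (Fin n → ℝ)) :=
  fun p =>
    (fun j =>
      if (j : ℕ) = 0 then
        vmin (d j p.1 p.2) (a + Ms.mulVec p.2 + ∑ i, (Md i).mulVec (p.1 i))
      else
        vmin (d j p.1 p.2)
          (vpos (a + Ms.mulVec p.2 + ∑ i, (Md i).mulVec (p.1 i) -
            ∑ i ∈ Finset.Iio j, d i p.1 p.2)),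
     vpos (a + Ms.mulVec p.2 + ∑ i, (Md i).mulVec (p.1 i) - ∑ i, d i p.1 p.2))

/-- ℓ¹-norm on ℝ^{n(m+1)} = (ℝ^n)^m × ℝ^n. -/
def l1P {n m : ℕ} (p : (Fin m → Fin n → ℝ) × (Fin n → ℝ)) : ℝ :=
  (∑ i, l1 (p.1 i)) + l1 p.2

/-!
At node `j` the map `Phi` pays the inflow `y = (Mˢ s + Σ_l M^{d,l} r^l)_j`, together with `a_j`,
out through the waterfall of debt tranches and equity. By the seniority condition every waterfall
output is monotone in `y`, and the outputs always add up to `a_j + y`; so the ℓ¹-distance between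
the outputs at two inflows is at most the distance of the inflows. Summing over the nodes and
bounding the column sums of the ownership matrices by `Imax < 1` shows that `Phi` is an
ℓ¹-contraction, and Banach's fixed point theorem does the rest.
-/

theorem exists_isFixedPt_tendsto_of_dist_le_mul {α β : Type*} [MetricSpace β] [CompleteSpace β]
    [Nonempty β] (e : α ≃ β) {f : α → α} {K : NNReal} (hK : K < 1)
    (hf : ∀ x y, dist (e (f x)) (e (f y)) ≤ K * dist (e x) (e y)) :
    ∃ p, Function.IsFixedPt f p ∧ (∀ q, Function.IsFixedPt f q → q = p) ∧
      ∀ x, Tendsto (fun k => dist (e (f^[k] x)) (e p)) atTop (nhds 0) := by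
  set g := e.conj f
  have hg : ContractingWith K g :=
    ⟨hK, LipschitzWith.of_dist_le_mul fun x y => by simpa [g] using hf (e.symm x) (e.symm y)⟩
  have he : Function.Semiconj e f g := fun x => by simp [g]
  have he_symm : Function.Semiconj e.symm g f := fun x => by simp [g]
  refine ⟨e.symm (hg.fixedPoint g), hg.fixedPoint_isFixedPt.map he_symm, fun q hq => ?_,
    fun x => ?_⟩
  · exact e.eq_symm_apply.2 (hg.fixedPoint_unique (hq.map he))
  · simp only [e.apply_symm_apply, (he.iterate_right _).eq]
    exact tendsto_iff_dist_tendsto_zero.1 (hg.tendsto_iterate_fixedPoint (e x))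

lemma iSup_lt_of_finite {ι : Type*} [Finite ι] {f : ι → ℝ} {c : ℝ} (hc : 0 < c)
    (hf : ∀ i, f i < c) : ⨆ i, f i < c := by
  cases isEmpty_or_nonempty ι
  · simpa [Real.iSup_of_isEmpty] using hc
  · obtain ⟨i, hi⟩ := exists_eq_ciSup_of_finite (f := f)
    exact hi ▸ hf i

lemma min_max_sub_eq_min_sub_min (u t s : ℝ) (hs : 0 ≤ s) :
    min s (max (u - t) 0) = min u (t + s) - min u t := by
  simp only [min_def, max_def]
  split_ifs <;> linarith

section Waterfall

variable {m : ℕ} (a : ℝ) (ψ : Fin m → ℝ → ℝ)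

-- `a` is the node's external asset, `y` its inflow from cross-holdings and `ψ i y` the face
-- value of tranche `i`; tranche `0` is the most senior.
def trancheValue (i : Fin m) (y : ℝ) : ℝ :=
  if (i : ℕ) = 0 then min (ψ i y) (a + y)
  else min (ψ i y) (max (a + y - ∑ l ∈ Iio i, ψ l y) 0)

def equityValue (y : ℝ) : ℝ := max (a + y - ∑ i, ψ i y) 0

lemma sum_trancheValue_add_equityValue (hm : m ≠ 0) (hψ : ∀ i y, 0 ≤ ψ i y) (y : ℝ) :
    ∑ i, trancheValue a ψ i y + equityValue a ψ y = a + y := by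
  set S : ℕ → ℝ := fun k => ∑ l with l.val < k, ψ l y
  -- `G k` is what the `k` most senior tranches receive together; `G 0 = 0` rather than
  -- `min (a + y) 0` because the senior tranche is not truncated at `0`.
  set G : ℕ → ℝ := fun k => if k = 0 then 0 else min (a + y) (S k)
  have hS_succ (i : Fin m) : S (i + 1) = S i + ψ i y := by
    have hfilter : univ.filter (fun l : Fin m => l.val < i.val + 1) =
        insert i (univ.filter fun l => l.val < i.val) := by
      ext l
      simp only [Finset.mem_filter, Finset.mem_insert, Finset.mem_univ, true_and, Fin.ext_iff]
      omega
    simp only [S, hfilter]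
    rw [Finset.sum_insert (by simp), add_comm]
  have hS_Iio (i : Fin m) : ∑ l ∈ Iio i, ψ l y = S i := by
    simp only [S, ← Fin.lt_def, Finset.filter_gt_eq_Iio]
  have hS_last : S m = ∑ i, ψ i y := by
    simp [S]
  have htranche (i : Fin m) : trancheValue a ψ i y = G (i + 1) - G i := by
    by_cases hi : (i : ℕ) = 0
    · have hS_one : S 1 = ψ i y := by simpa [hi, S] using hS_succ i
      simp [trancheValue, G, hi, hS_one, min_comm]
    · simp only [trancheValue, G, hi, hS_Iio, hS_succ, if_false, Nat.add_one_ne_zero]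
      exact min_max_sub_eq_min_sub_min _ _ _ (hψ i y)
  calc ∑ i, trancheValue a ψ i y + equityValue a ψ y = (G m - G 0) + equityValue a ψ y := by
        rw [Finset.sum_congr rfl fun i _ => htranche i,
          Fin.sum_univ_eq_sum_range (fun k => G (k + 1) - G k), Finset.sum_range_sub]
    _ = a + y := by
      simp only [G, hm, hS_last, equityValue, if_true, if_false]
      grind

lemma trancheValue_mono (hmono : ∀ i, Monotone (ψ i))
    (hlip : ∀ y₁ y₂, y₂ ≤ y₁ → ∑ i, (ψ i y₁ - ψ i y₂) ≤ y₁ - y₂) (i : Fin m) :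
    Monotone (trancheValue a ψ i) := by
  intro y' y h
  have hprefix : ∑ l ∈ Iio i, (ψ l y - ψ l y') ≤ y - y' :=
    (Finset.sum_le_sum_of_subset_of_nonneg (Finset.subset_univ _)
      fun l _ _ => sub_nonneg.2 (hmono l h)).trans (hlip y y' h)
  rw [Finset.sum_sub_distrib] at hprefix
  unfold trancheValue
  split_ifs
  · exact min_le_min (hmono i h) (by linarith)
  · exact min_le_min (hmono i h) (max_le_max (by linarith) le_rfl)

lemma equityValue_mono (hlip : ∀ y₁ y₂, y₂ ≤ y₁ → ∑ i, (ψ i y₁ - ψ i y₂) ≤ y₁ - y₂) :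
    Monotone (equityValue a ψ) := by
  intro y' y h
  have := hlip y y' h
  rw [Finset.sum_sub_distrib] at this
  exact max_le_max (by linarith) le_rfl

theorem sum_abs_sub_trancheValue_add_abs_sub_equityValue_le (hm : m ≠ 0) (hψ : ∀ i y, 0 ≤ ψ i y)
    (hmono : ∀ i, Monotone (ψ i))
    (hlip : ∀ y₁ y₂, y₂ ≤ y₁ → ∑ i, (ψ i y₁ - ψ i y₂) ≤ y₁ - y₂) (y y' : ℝ) :
    ∑ i, |trancheValue a ψ i y - trancheValue a ψ i y'| +
      |equityValue a ψ y - equityValue a ψ y'| ≤ |y - y'| := by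
  wlog h : y' ≤ y generalizing y y'
  · simpa only [abs_sub_comm] using this y' y (le_of_not_ge h)
  have htranche (i : Fin m) := trancheValue_mono a ψ hmono hlip i h
  rw [abs_of_nonneg (sub_nonneg.2 h), abs_of_nonneg (sub_nonneg.2 (equityValue_mono a ψ hlip h)),
    Finset.sum_congr rfl fun i _ => abs_of_nonneg (sub_nonneg.2 (htranche i)),
    Finset.sum_sub_distrib]
  linarith [sum_trancheValue_add_equityValue a ψ hm hψ y,
    sum_trancheValue_add_equityValue a ψ hm hψ y']

end Waterfall

section L1

variable {n m : ℕ}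

lemma l1_eq_norm (v : Fin n → ℝ) : l1 v = ‖WithLp.toLp 1 v‖ := by
  simp [l1, PiLp.norm_eq_of_L1]

lemma l1_add_le (u v : Fin n → ℝ) : l1 (u + v) ≤ l1 u + l1 v := by
  simpa only [l1_eq_norm, WithLp.toLp_add] using norm_add_le _ _

lemma l1_sum_le {ι : Type*} (s : Finset ι) (f : ι → Fin n → ℝ) :
    l1 (∑ i ∈ s, f i) ≤ ∑ i ∈ s, l1 (f i) := by
  simpa only [l1_eq_norm, WithLp.toLp_sum] using norm_sum_le _ _

lemma l1_mulVec_le {M : Matrix (Fin n) (Fin n) ℝ} {c : ℝ} (hM : ∀ i j, 0 ≤ M i j)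
    (hc : ∀ j, ∑ i, M i j ≤ c) (v : Fin n → ℝ) : l1 (M *ᵥ v) ≤ c * l1 v := by
  calc l1 (M *ᵥ v) ≤ ∑ i, ∑ j, M i j * |v j| := by
        unfold l1 Matrix.mulVec dotProduct
        refine Finset.sum_le_sum fun i _ => (Finset.abs_sum_le_sum_abs _ _).trans_eq ?_
        simp only [abs_mul, abs_of_nonneg (hM i _)]
    _ = ∑ j, (∑ i, M i j) * |v j| := by
        rw [Finset.sum_comm]; simp only [Finset.sum_mul]
    _ ≤ ∑ j, c * |v j| := Finset.sum_le_sum fun j _ => by gcongr; exact hc j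
    _ = c * l1 v := by rw [l1, Finset.mul_sum]

lemma l1P_eq_sum (p : (Fin m → Fin n → ℝ) × (Fin n → ℝ)) :
    l1P p = ∑ j, (∑ i, |p.1 i j| + |p.2 j|) := by
  rw [Finset.sum_add_distrib, Finset.sum_comm]
  rfl

abbrev L1Space (m n : ℕ) :=
  WithLp 1 (PiLp 1 (fun _ : Fin m => PiLp 1 (fun _ : Fin n => ℝ)) × PiLp 1 (fun _ : Fin n => ℝ))

def toL1Space {m n : ℕ} : (Fin m → Fin n → ℝ) × (Fin n → ℝ) ≃ L1Space m n where
  toFun p := WithLp.toLp 1 (WithLp.toLp 1 fun i => WithLp.toLp 1 (p.1 i), WithLp.toLp 1 p.2)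
  invFun x := (fun i => (x.fst i).ofLp, x.snd.ofLp)
  left_inv _ := rfl
  right_inv _ := rfl

lemma dist_toL1Space {m n : ℕ} (p q : (Fin m → Fin n → ℝ) × (Fin n → ℝ)) :
    dist (toL1Space p) (toL1Space q) = l1P (p - q) := by
  rw [dist_eq_norm, WithLp.prod_norm_eq_of_L1, PiLp.norm_eq_of_L1]
  simp only [l1P, l1_eq_norm]
  rfl

end L1

section Imax

variable {n m : ℕ} (Ms : Matrix (Fin n) (Fin n) ℝ) (Md : Fin m → Matrix (Fin n) (Fin n) ℝ)

lemma le_Imax_left (j : Fin n) : ∑ i, Ms i j ≤ Imax Ms Md :=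
  (le_ciSup (Finite.bddAbove_range fun j => ∑ i, Ms i j) j).trans (le_max_left _ _)

lemma le_Imax_right (l : Fin m) (j : Fin n) : ∑ i, Md l i j ≤ Imax Ms Md :=
  ((le_ciSup (Finite.bddAbove_range fun j => ∑ i, Md l i j) j).trans
    (le_ciSup (Finite.bddAbove_range fun l => ⨆ j, ∑ i, Md l i j) l)).trans (le_max_right _ _)

variable {Ms Md}

lemma Imax_nonneg (hMs : ∀ i j, 0 ≤ Ms i j) : 0 ≤ Imax Ms Md :=
  (Real.iSup_nonneg fun j => Finset.sum_nonneg fun i _ => hMs i j).trans (le_max_left _ _)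

lemma Imax_lt_one (hMs : StrictlyLeftSubstochastic Ms)
    (hMd : ∀ l, StrictlyLeftSubstochastic (Md l)) : Imax Ms Md < 1 :=
  max_lt (iSup_lt_of_finite one_pos hMs.2)
    (iSup_lt_of_finite one_pos fun l => iSup_lt_of_finite one_pos (hMd l).2)

end Imax

section Network

variable {n m : ℕ}

def inflow (Ms : Matrix (Fin n) (Fin n) ℝ) (Md : Fin m → Matrix (Fin n) (Fin n) ℝ)
    (p : (Fin m → Fin n → ℝ) × (Fin n → ℝ)) : Fin n → ℝ :=
  Ms *ᵥ p.2 + ∑ l, Md l *ᵥ p.1 l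

lemma inflow_sub (Ms : Matrix (Fin n) (Fin n) ℝ) (Md : Fin m → Matrix (Fin n) (Fin n) ℝ)
    (p q : (Fin m → Fin n → ℝ) × (Fin n → ℝ)) :
    inflow Ms Md p - inflow Ms Md q = inflow Ms Md (p - q) := by
  simp only [inflow, Prod.fst_sub, Prod.snd_sub, Pi.sub_apply, Matrix.mulVec_sub,
    Finset.sum_sub_distrib]
  abel

variable {a : Fin n → ℝ} {Ms : Matrix (Fin n) (Fin n) ℝ} {Md : Fin m → Matrix (Fin n) (Fin n) ℝ}
  {d : Fin m → (Fin m → Fin n → ℝ) → (Fin n → ℝ) → (Fin n → ℝ)} {psi : Fin m → Fin n → ℝ → ℝ}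

lemma Phi_fst_apply
    (hd : ∀ i r s j, d i r s j = psi i j (Ms.mulVec s j + ∑ l, (Md l).mulVec (r l) j))
    (p : (Fin m → Fin n → ℝ) × (Fin n → ℝ)) (i : Fin m) (j : Fin n) :
    (Phi a Ms Md d p).1 i j = trancheValue (a j) (fun i => psi i j) i (inflow Ms Md p j) := by
  by_cases hi : (i : ℕ) = 0 <;>
    simp [Phi, trancheValue, inflow, vmin, vpos, hi, hd, Finset.sum_apply, add_assoc]

lemma Phi_snd_apply
    (hd : ∀ i r s j, d i r s j = psi i j (Ms.mulVec s j + ∑ l, (Md l).mulVec (r l) j))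
    (p : (Fin m → Fin n → ℝ) × (Fin n → ℝ)) (j : Fin n) :
    (Phi a Ms Md d p).2 j = equityValue (a j) (fun i => psi i j) (inflow Ms Md p j) := by
  simp [Phi, equityValue, inflow, vpos, hd, Finset.sum_apply, add_assoc]

lemma liqSystem_iff_isFixedPt (p : (Fin m → Fin n → ℝ) × (Fin n → ℝ)) :
    LiqSystem a Ms Md d p.1 p.2 ↔ Function.IsFixedPt (Phi a Ms Md d) p := by
  constructor
  · rintro ⟨hsenior, hjunior, hequity⟩
    refine Prod.ext (funext fun j => ?_) hequity.symm
    by_cases hj : (j : ℕ) = 0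
    · simpa only [Phi, hj, if_true] using (hsenior j hj).symm
    · simpa only [Phi, hj, if_false] using (hjunior j hj).symm
  · intro h
    have hr (j : Fin m) := congrFun (congrArg Prod.fst h) j
    refine ⟨fun j hj => ?_, fun j hj => ?_, (congrArg Prod.snd h).symm⟩
    · simpa only [Phi, hj, if_true] using (hr j).symm
    · simpa only [Phi, hj, if_false] using (hr j).symm

lemma l1_inflow_le {c : ℝ} (hMs : ∀ i j, 0 ≤ Ms i j) (hMd : ∀ l i j, 0 ≤ Md l i j)
    (hcMs : ∀ j, ∑ i, Ms i j ≤ c) (hcMd : ∀ l j, ∑ i, Md l i j ≤ c)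
    (p : (Fin m → Fin n → ℝ) × (Fin n → ℝ)) : l1 (inflow Ms Md p) ≤ c * l1P p :=
  calc l1 (inflow Ms Md p) ≤ l1 (Ms *ᵥ p.2) + ∑ l, l1 (Md l *ᵥ p.1 l) :=
        (l1_add_le _ _).trans (by gcongr; exact l1_sum_le _ _)
    _ ≤ c * l1 p.2 + ∑ l, c * l1 (p.1 l) :=
        add_le_add (l1_mulVec_le hMs hcMs _)
          (Finset.sum_le_sum fun l _ => l1_mulVec_le (hMd l) (hcMd l) _)
    _ = c * l1P p := by rw [l1P, ← Finset.mul_sum]; ring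

lemma l1P_Phi_sub_le (hm : m ≠ 0)
    (hd : ∀ i r s j, d i r s j = psi i j (Ms.mulVec s j + ∑ l, (Md l).mulVec (r l) j))
    (hpsi_nonneg : ∀ i j y, 0 ≤ psi i j y) (hpsi_mono : ∀ i j, Monotone (psi i j))
    (hpsi_lip : ∀ j (y1 y2 : ℝ), y2 ≤ y1 → ∑ i, (psi i j y1 - psi i j y2) ≤ y1 - y2)
    (p q : (Fin m → Fin n → ℝ) × (Fin n → ℝ)) :
    l1P (Phi a Ms Md d p - Phi a Ms Md d q) ≤ l1 (inflow Ms Md p - inflow Ms Md q) := by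
  rw [l1P_eq_sum]
  refine Finset.sum_le_sum fun j _ => ?_
  simp only [Prod.fst_sub, Prod.snd_sub, Pi.sub_apply, Phi_fst_apply hd, Phi_snd_apply hd]
  exact sum_abs_sub_trancheValue_add_abs_sub_equityValue_le _ _ hm (hpsi_nonneg · j)
    (hpsi_mono · j) (hpsi_lip j) _ _

lemma l1P_Phi_sub_le_Imax_mul (hm : m ≠ 0) (hMs : ∀ i j, 0 ≤ Ms i j)
    (hMd : ∀ l i j, 0 ≤ Md l i j)
    (hd : ∀ i r s j, d i r s j = psi i j (Ms.mulVec s j + ∑ l, (Md l).mulVec (r l) j))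
    (hpsi_nonneg : ∀ i j y, 0 ≤ psi i j y) (hpsi_mono : ∀ i j, Monotone (psi i j))
    (hpsi_lip : ∀ j (y1 y2 : ℝ), y2 ≤ y1 → ∑ i, (psi i j y1 - psi i j y2) ≤ y1 - y2)
    (p q : (Fin m → Fin n → ℝ) × (Fin n → ℝ)) :
    l1P (Phi a Ms Md d p - Phi a Ms Md d q) ≤ Imax Ms Md * l1P (p - q) := by
  refine (l1P_Phi_sub_le hm hd hpsi_nonneg hpsi_mono hpsi_lip p q).trans ?_
  rw [inflow_sub]
  exact l1_inflow_le hMs hMd (le_Imax_left Ms Md) (le_Imax_right Ms Md) _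

end Network

theorem picard_iteration_converges_general {n m : ℕ} (hm : 0 < m)
    (a : Fin n → ℝ)
    (Ms : Matrix (Fin n) (Fin n) ℝ) (hMs : StrictlyLeftSubstochastic Ms)
    (Md : Fin m → Matrix (Fin n) (Fin n) ℝ) (hMd : ∀ i, StrictlyLeftSubstochastic (Md i))
    (d : Fin m → (Fin m → Fin n → ℝ) → (Fin n → ℝ) → (Fin n → ℝ))
    (psi : Fin m → Fin n → ℝ → ℝ)
    (hpsi_nonneg : ∀ i j y, 0 ≤ psi i j y)
    (hpsi_mono : ∀ i j, Monotone (psi i j))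
    (hd_eq : ∀ i r s j, d i r s j = psi i j (Ms.mulVec s j + ∑ l, (Md l).mulVec (r l) j))
    (hpsi_lip : ∀ j (y1 y2 : ℝ), y2 ≤ y1 → ∑ i, (psi i j y1 - psi i j y2) ≤ y1 - y2) :
    ∃ p : (Fin m → Fin n → ℝ) × (Fin n → ℝ),
      LiqSystem a Ms Md d p.1 p.2 ∧
      (∀ q : (Fin m → Fin n → ℝ) × (Fin n → ℝ), LiqSystem a Ms Md d q.1 q.2 → q = p) ∧
      ∀ x0 : (Fin m → Fin n → ℝ) × (Fin n → ℝ),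
        Tendsto (fun k => l1P ((Phi a Ms Md d)^[k] x0 - p)) atTop (nhds 0) := by
  obtain ⟨p, hp, huniq, hlim⟩ := exists_isFixedPt_tendsto_of_dist_le_mul toL1Space
    (f := Phi a Ms Md d) (K := ⟨Imax Ms Md, Imax_nonneg hMs.1⟩) (Imax_lt_one hMs hMd) fun x y => by
      rw [dist_toL1Space, dist_toL1Space]
      exact l1P_Phi_sub_le_Imax_mul hm.ne' hMs.1 (fun l => (hMd l).1)
        hd_eq hpsi_nonneg hpsi_mono hpsi_lip x y
  refine ⟨p, (liqSystem_iff_isFixedPt p).2 hp,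
    fun q hq => huniq q ((liqSystem_iff_isFixedPt q).1 hq), fun x0 => ?_⟩
  simpa only [dist_toL1Space] using hlim x0

/-- Convergence of the Picard iteration: under the seniority structure condition the
iterates of Φ converge in ℓ¹-norm, from any starting point, to the unique solution of
the liquidation value system. -/
theorem picard_iteration_converges {n m : ℕ} (hn : 0 < n) (hm : 0 < m)
    (a : Fin n → ℝ) (ha : ∀ k, 0 ≤ a k)
    (Ms : Matrix (Fin n) (Fin n) ℝ) (hMs : StrictlyLeftSubstochastic Ms)
    (Md : Fin m → Matrix (Fin n) (Fin n) ℝ) (hMd : ∀ i, StrictlyLeftSubstochastic (Md i))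
    (d : Fin m → (Fin m → Fin n → ℝ) → (Fin n → ℝ) → (Fin n → ℝ))
    (hd : ∀ i r s k, 0 ≤ d i r s k)
    (psi : Fin m → Fin n → ℝ → ℝ)
    (hpsi_nonneg : ∀ i j y, 0 ≤ psi i j y)
    (hpsi_mono : ∀ i j, Monotone (psi i j))
    (hd_eq : ∀ i r s j, d i r s j = psi i j (Ms.mulVec s j + ∑ l, (Md l).mulVec (r l) j))
    (hpsi_lip : ∀ j (y1 y2 : ℝ), y2 ≤ y1 → ∑ i, (psi i j y1 - psi i j y2) ≤ y1 - y2) :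
    ∃ p : (Fin m → Fin n → ℝ) × (Fin n → ℝ),
      LiqSystem a Ms Md d p.1 p.2 ∧
      (∀ q : (Fin m → Fin n → ℝ) × (Fin n → ℝ), LiqSystem a Ms Md d q.1 q.2 → q = p) ∧
      ∀ x0 : (Fin m → Fin n → ℝ) × (Fin n → ℝ),
        Tendsto (fun k => l1P ((Phi a Ms Md d)^[k] x0 - p)) atTop (nhds 0) :=
  picard_iteration_converges_general hm a Ms hMs Md hMd d psi hpsi_nonneg hpsi_mono hd_eq hpsi_lip
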